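/- arXiv:2410.15150 — 2 statements merged into one kernel-verified Lean document; each statement's English description precedes it below -/
import Mathlib

section
/- Let X be a complex Hilbert space and D a bounded operator on X. Then there exists a constant c > 0 such that ‖c·D − I‖ ≤ 1 if and only if there exists a constant c₁ > 0 such that c₁·(Im D)² ≤ Re D (as selfadjoint operators), where Re D = (D + D*)/2 and Im D = (D − D*)/(2i). In particular, any such D satisfies Re D ≥ 0. -/
/-!
Write `a = r + i j` with `r = ℜ a` and `j = ℑ a` selfadjoint, so that `a⋆a + aa⋆ = 2 (r² + j²)`.
Expanding `(c a - 1)⋆(c a - 1) ≤ 1` shows that `‖c a - 1‖ ≤ 1` means `c a⋆a ≤ 2 r`, and as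
`‖c a⋆ - 1‖ = ‖c a - 1‖` also `c aa⋆ ≤ 2 r`; adding, `c j² ≤ c (r² + j²) ≤ 2 r`. Conversely
`c₁ j² ≤ r` forces `r ≥ 0`, hence `r² ≤ ‖r‖ r`, and then `a⋆a ≤ 2 (r² + j²) ≤ 2 (‖r‖ + c₁⁻¹) r`.
Nothing beyond the C⋆-identity and the order on positive elements is used, so the argument runs in
any unital C⋆-algebra.
-/

open ContinuousLinearMap

variable {X : Type*} [NormedAddCommGroup X] [InnerProductSpace ℂ X] [CompleteSpace X]

/-- The real part `Re D = (D + D*)/2` of a bounded operator. -/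
noncomputable def reOp (D : X →L[ℂ] X) : X →L[ℂ] X := (1 / 2 : ℂ) • (D + adjoint D)

/-- The imaginary part `Im D = (D − D*)/(2i)` of a bounded operator. -/
noncomputable def imOp (D : X →L[ℂ] X) : X →L[ℂ] X :=
  (1 / (2 * Complex.I) : ℂ) • (D - adjoint D)

open ComplexStarModule

theorem star_mul_self_add_mul_star_self {A : Type*} [Ring A] [StarRing A] [Algebra ℂ A]
    [StarModule ℂ A] (a : A) :
    star a * a + a * star a = (2 : ℝ) • ((ℜ a : A) * ℜ a + (ℑ a : A) * ℑ a) := by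
  have ha := (realPart_add_I_smul_imaginaryPart a).symm
  have hstar : star a = (ℜ a : A) - Complex.I • (ℑ a : A) := by
    conv_lhs => rw [ha]
    simp [sub_eq_add_neg, (ℜ a).2.star_eq, (ℑ a).2.star_eq]
  rw [hstar]
  clear hstar
  generalize (ℜ a : A) = r at ha ⊢
  generalize (ℑ a : A) = j at ha ⊢
  subst ha
  simp only [mul_add, add_mul, mul_sub, sub_mul, smul_mul_assoc, mul_smul_comm]
  match_scalars <;> simp [one_add_one_eq_two]

namespace CStarAlgebra

variable {A : Type*} [CStarAlgebra A] [PartialOrder A] [StarOrderedRing A]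

theorem norm_le_one_iff_star_mul_self_le_one (b : A) : ‖b‖ ≤ 1 ↔ star b * b ≤ 1 := by
  rw [← norm_le_one_iff_of_nonneg (star b * b) (star_mul_self_nonneg b),
    CStarRing.norm_star_mul_self, ← sq, sq_le_one_iff₀ (norm_nonneg b)]

theorem mul_self_le_norm_smul_self {r : A} (hr : 0 ≤ r) : r * r ≤ ‖r‖ • r := by
  set s := CFC.sqrt r
  have hs : s * s = r := CFC.sqrt_mul_sqrt_self r
  calc r * r = s * r * s := by rw [← hs]; simp only [mul_assoc]
    _ ≤ s * algebraMap ℝ A ‖r‖ * s :=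
      (IsSelfAdjoint.of_nonneg (CFC.sqrt_nonneg r)).conjugate_le_conjugate
        (IsSelfAdjoint.of_nonneg hr).le_algebraMap_norm_self
    _ = ‖r‖ • r := by
      rw [Algebra.algebraMap_eq_smul_one, mul_smul_comm, mul_one, smul_mul_assoc, hs]

theorem norm_smul_sub_one_le_one_iff (a : A) {c : ℝ} (hc : 0 < c) :
    ‖c • a - 1‖ ≤ 1 ↔ c • (star a * a) ≤ (2 : ℝ) • (ℜ a : A) := by
  have hexpand : star (c • a - 1) * (c • a - 1)
      = c • (c • (star a * a)) - c • ((2 : ℝ) • (ℜ a : A)) + 1 := by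
    rw [realPart_apply_coe, smul_inv_smul₀ two_ne_zero, star_sub, star_smul, star_one,
      star_trivial c]
    simp only [mul_sub, sub_mul, smul_mul_assoc, mul_smul_comm, mul_one, one_mul]
    module
  rw [norm_le_one_iff_star_mul_self_le_one, hexpand, add_le_iff_nonpos_left, sub_nonpos,
    smul_le_smul_iff_of_pos_left hc]

theorem smul_imaginaryPart_mul_self_le_realPart {a : A} {c : ℝ} (hc : 0 < c)
    (h : ‖c • a - 1‖ ≤ 1) : (c / 2) • ((ℑ a : A) * ℑ a) ≤ ℜ a := by
  have h₁ := (norm_smul_sub_one_le_one_iff a hc).1 h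
  have h₂ : c • (a * star a) ≤ (2 : ℝ) • (ℜ a : A) := by
    have hstar : ‖c • star a - 1‖ ≤ 1 := by
      rwa [show c • star a - 1 = star (c • a - 1) by simp, norm_star]
    simpa [realPart_apply_coe, add_comm] using (norm_smul_sub_one_le_one_iff (star a) hc).1 hstar
  calc (c / 2) • ((ℑ a : A) * ℑ a)
      ≤ (c / 2) • ((ℜ a : A) * ℜ a + (ℑ a : A) * ℑ a) := by
        gcongr
        exact le_add_of_nonneg_left (ℜ a).2.mul_self_nonneg
    _ = (1 / 4 : ℝ) • (c • (star a * a) + c • (a * star a)) := by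
        rw [← smul_add, star_mul_self_add_mul_star_self]
        module
    _ ≤ (1 / 4 : ℝ) • ((2 : ℝ) • (ℜ a : A) + (2 : ℝ) • (ℜ a : A)) := by gcongr
    _ = ℜ a := by module

theorem exists_norm_smul_sub_one_le_one_of_smul_imaginaryPart_mul_self_le {a : A} {c₁ : ℝ}
    (hc₁ : 0 < c₁) (h : c₁ • ((ℑ a : A) * ℑ a) ≤ ℜ a) : ∃ c : ℝ, 0 < c ∧ ‖c • a - 1‖ ≤ 1 := by
  have hr : 0 ≤ (ℜ a : A) := (smul_nonneg hc₁.le (ℑ a).2.mul_self_nonneg).trans h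
  have hj : (ℑ a : A) * ℑ a ≤ c₁⁻¹ • (ℜ a : A) := (le_inv_smul_iff_of_pos hc₁).2 h
  have hK : 0 < ‖(ℜ a : A)‖ + c₁⁻¹ := by positivity
  refine ⟨(‖(ℜ a : A)‖ + c₁⁻¹)⁻¹, inv_pos.2 hK,
    (norm_smul_sub_one_le_one_iff a (inv_pos.2 hK)).2 ((inv_smul_le_iff_of_pos hK).2 ?_)⟩
  calc star a * a ≤ star a * a + a * star a := le_add_of_nonneg_right (mul_star_self_nonneg a)
    _ = (2 : ℝ) • ((ℜ a : A) * ℜ a + (ℑ a : A) * ℑ a) := star_mul_self_add_mul_star_self a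
    _ ≤ (2 : ℝ) • (‖(ℜ a : A)‖ • (ℜ a : A) + c₁⁻¹ • (ℜ a : A)) := by
        gcongr
        exact mul_self_le_norm_smul_self hr
    _ = (‖(ℜ a : A)‖ + c₁⁻¹) • (2 : ℝ) • (ℜ a : A) := by module

theorem exists_norm_smul_sub_one_le_one_iff (a : A) :
    (∃ c : ℝ, 0 < c ∧ ‖c • a - 1‖ ≤ 1) ↔ ∃ c₁ : ℝ, 0 < c₁ ∧ c₁ • ((ℑ a : A) * ℑ a) ≤ ℜ a :=
  ⟨fun ⟨c, hc, h⟩ ↦ ⟨c / 2, by positivity, smul_imaginaryPart_mul_self_le_realPart hc h⟩,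
    fun ⟨_, hc₁, h⟩ ↦ exists_norm_smul_sub_one_le_one_of_smul_imaginaryPart_mul_self_le hc₁ h⟩

theorem realPart_nonneg_of_norm_smul_sub_one_le_one {a : A} {c : ℝ} (hc : 0 < c)
    (h : ‖c • a - 1‖ ≤ 1) : 0 ≤ (ℜ a : A) :=
  (smul_nonneg (by positivity) (ℑ a).2.mul_self_nonneg).trans
    (smul_imaginaryPart_mul_self_le_realPart hc h)

end CStarAlgebra

theorem reOp_eq_realPart (D : X →L[ℂ] X) : reOp D = ℜ D := by
  rw [reOp, realPart_apply_coe, star_eq_adjoint, ← Complex.coe_smul]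
  norm_num

theorem imOp_eq_imaginaryPart (D : X →L[ℂ] X) : imOp D = ℑ D := by
  rw [imOp, imaginaryPart_apply_coe, star_eq_adjoint, ← Complex.coe_smul, smul_smul]
  congr 1
  field_simp
  simp

/-- There exists `c > 0` with `‖c•D − I‖ ≤ 1` iff there exists `c₁ > 0` with
`c₁ (Im D)² ≤ Re D`; in particular, any such `D` satisfies `Re D ≥ 0`. -/
theorem admissible_direction_from_neg_id_iff (D : X →L[ℂ] X) :
    ((∃ c : ℝ, 0 < c ∧ ‖(c : ℂ) • D - 1‖ ≤ 1) ↔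
      (∃ c₁ : ℝ, 0 < c₁ ∧ (reOp D - (c₁ : ℂ) • (imOp D * imOp D)).IsPositive)) ∧
    ((∃ c : ℝ, 0 < c ∧ ‖(c : ℂ) • D - 1‖ ≤ 1) → (reOp D).IsPositive) := by
  simp only [← nonneg_iff_isPositive, sub_nonneg, Complex.coe_smul, reOp_eq_realPart,
    imOp_eq_imaginaryPart]
  exact ⟨CStarAlgebra.exists_norm_smul_sub_one_le_one_iff D,
    fun ⟨_, hc, h⟩ ↦ CStarAlgebra.realPart_nonneg_of_norm_smul_sub_one_le_one hc h⟩
end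

section
/- Let (ξⱼ)ⱼ∈ℕ be independent complex-valued random variables. Then P{limⱼ→∞ ξⱼ = −1} = 1 if and only if for every δ > 0 there exists N ∈ ℕ such that the infinite product ∏_{j=N}^∞ P{|ξⱼ + 1| < δ} is strictly positive. Moreover P{limⱼ→∞ ξⱼ = −1} is either 0 or 1. -/
open MeasureTheory ProbabilityTheory Filter Finset Topology

/-!
Fix `δ > 0` and put `a j = P {|ξ j + 1| ≥ δ}`. The tail products `∏ (1 - a j)` have a positive
limit iff `∑ a j < ∞`. By the first Borel–Cantelli lemma, `∑ a j < ∞` means that almost surely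
`|ξ j + 1| < δ` eventually; by the second one (this is where independence enters),
`∑ a j = ∞` means that almost surely `|ξ j + 1| ≥ δ` infinitely often, so that `ξ j → -1` fails
almost surely. Running over `δ = 1 / (k + 1)` gives both the criterion and the zero-one law.
-/

lemma exp_neg_two_mul_le_one_sub {x : ℝ} (h0 : 0 ≤ x) (h1 : x ≤ 1 / 2) :
    Real.exp (-(2 * x)) ≤ 1 - x := by
  have hexp : 1 + 2 * x ≤ Real.exp (2 * x) := by linarith [Real.add_one_le_exp (2 * x)]
  have hinv : Real.exp (-(2 * x)) * Real.exp (2 * x) = 1 := by rw [← Real.exp_add]; simp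
  -- `(1 - x) * (1 + 2 * x) ≥ 1` for `0 ≤ x ≤ 1 / 2`
  nlinarith [Real.exp_pos (-(2 * x))]

section InfiniteProduct

variable {a : ℕ → ℝ}

lemma antitone_prod_Ico_one_sub (h0 : ∀ j, 0 ≤ a j) (h1 : ∀ j, a j ≤ 1) (N : ℕ) :
    Antitone fun n => ∏ j ∈ Ico N n, (1 - a j) :=
  (prod_anti_set_of_le_one (fun j => sub_nonneg.2 (h1 j)) fun j => sub_le_self _ (h0 j))
    |>.comp_monotone fun _ _ h => Ico_subset_Ico_right h

lemma exists_tendsto_prod_Ico_one_sub_pos_of_summable (h0 : ∀ j, 0 ≤ a j) (h1 : ∀ j, a j ≤ 1)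
    (ha : Summable a) :
    ∃ N : ℕ, ∃ L : ℝ, 0 < L ∧ Tendsto (fun n => ∏ j ∈ Ico N n, (1 - a j)) atTop (𝓝 L) := by
  obtain ⟨N, hN⟩ : ∃ N, ∀ j ≥ N, a j ≤ 1 / 2 :=
    eventually_atTop.1 (ha.tendsto_atTop_zero.eventually (ge_mem_nhds (by norm_num)))
  have hbound : ∀ n, Real.exp (-(2 * ∑' j, a j)) ≤ ∏ j ∈ Ico N n, (1 - a j) := fun n =>
    calc Real.exp (-(2 * ∑' j, a j))
        ≤ Real.exp (∑ j ∈ Ico N n, -(2 * a j)) := by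
          rw [sum_neg_distrib, ← mul_sum]
          gcongr
          exact ha.sum_le_tsum _ fun j _ => h0 j
      _ = ∏ j ∈ Ico N n, Real.exp (-(2 * a j)) := Real.exp_sum _ _
      _ ≤ ∏ j ∈ Ico N n, (1 - a j) :=
          prod_le_prod (fun _ _ => (Real.exp_pos _).le) fun j hj =>
            exp_neg_two_mul_le_one_sub (h0 j) (hN j (mem_Ico.1 hj).1)
  exact ⟨N, _, (Real.exp_pos _).trans_le (le_ciInf hbound),
    tendsto_atTop_ciInf (antitone_prod_Ico_one_sub h0 h1 N) ⟨_, Set.forall_mem_range.2 hbound⟩⟩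

lemma summable_of_tendsto_prod_Ico_one_sub (h0 : ∀ j, 0 ≤ a j) (h1 : ∀ j, a j ≤ 1)
    {N : ℕ} {L : ℝ} (hL : 0 < L)
    (hT : Tendsto (fun n => ∏ j ∈ Ico N n, (1 - a j)) atTop (𝓝 L)) : Summable a := by
  have hsum_le : ∀ n, ∑ j ∈ Ico N n, a j ≤ -Real.log L := fun n => by
    have hexp : ∏ j ∈ Ico N n, (1 - a j) ≤ Real.exp (-∑ j ∈ Ico N n, a j) := by
      rw [← sum_neg_distrib, Real.exp_sum]
      exact prod_le_prod (fun j _ => sub_nonneg.2 (h1 j)) fun j _ => by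
        linarith [Real.add_one_le_exp (-a j)]
    have hL_le := ((antitone_prod_Ico_one_sub h0 h1 N).le_of_tendsto hT n).trans hexp
    linarith [Real.log_le_log hL hL_le, Real.log_exp (-∑ j ∈ Ico N n, a j)]
  refine (summable_nat_add_iff N).1
    (summable_of_sum_range_le (c := -Real.log L) (fun _ => h0 _) fun n => ?_)
  rw [range_eq_Ico, sum_Ico_add', zero_add]
  exact hsum_le _

lemma exists_tendsto_prod_Ico_one_sub_pos_iff_summable (h0 : ∀ j, 0 ≤ a j)
    (h1 : ∀ j, a j ≤ 1) :
    (∃ N : ℕ, ∃ L : ℝ, 0 < L ∧ Tendsto (fun n => ∏ j ∈ Ico N n, (1 - a j)) atTop (𝓝 L)) ↔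
      Summable a :=
  ⟨fun ⟨_, _, hL, hT⟩ => summable_of_tendsto_prod_Ico_one_sub h0 h1 hL hT,
    exists_tendsto_prod_Ico_one_sub_pos_of_summable h0 h1⟩

end InfiniteProduct

section BorelCantelli

variable {Ω : Type*} [MeasurableSpace Ω] {P : Measure Ω} {s : ℕ → Set Ω}

lemma measure_limsup_atTop_eq_zero_of_summable_toReal [IsFiniteMeasure P]
    (h : Summable fun i => (P (s i)).toReal) : P (limsup s atTop) = 0 := by
  refine measure_limsup_atTop_eq_zero ?_
  rw [← tsum_congr fun i => ENNReal.ofReal_toReal (measure_ne_top P (s i)),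
    ← ENNReal.ofReal_tsum_of_nonneg (fun _ => ENNReal.toReal_nonneg) h]
  exact ENNReal.ofReal_ne_top

lemma ProbabilityTheory.iIndepSet.measure_limsup_eq_one_of_not_summable
    (hsm : ∀ i, MeasurableSet (s i)) (hs : iIndepSet s P)
    (h : ¬ Summable fun i => (P (s i)).toReal) :
    P (limsup s atTop) = 1 :=
  measure_limsup_eq_one hsm hs (not_ne_iff.1 fun h' => h (ENNReal.summable_toReal h'))

lemma ProbabilityTheory.iIndepSet.measure_limsup_eq_zero_iff (hsm : ∀ i, MeasurableSet (s i))
    (hs : iIndepSet s P) :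
    P (limsup s atTop) = 0 ↔ Summable fun i => (P (s i)).toReal := by
  have := hs.isProbabilityMeasure
  refine ⟨fun h0 => ?_, measure_limsup_atTop_eq_zero_of_summable_toReal⟩
  by_contra h
  simp [hs.measure_limsup_eq_one_of_not_summable hsm h] at h0

lemma ProbabilityTheory.iIndepFun.iIndepSet_preimage {E : Type*} [MeasurableSpace E]
    {ξ : ℕ → Ω → E} (hξ : iIndepFun ξ P) {S : ℕ → Set E} (hS : ∀ j, MeasurableSet (S j)) :
    iIndepSet (fun j => ξ j ⁻¹' S j) P :=
  (iIndepSet_iff_iIndep _ _).2 <| iIndep_of_iIndep_of_le ((iIndepFun_iff_iIndep _ _ _).1 hξ)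
    fun j => MeasurableSpace.generateFrom_le fun _ ht =>
      (Set.mem_singleton_iff.1 ht) ▸ ⟨S j, hS j, rfl⟩

end BorelCantelli

section Metric

variable {E : Type*} [PseudoMetricSpace E]

lemma tendsto_atTop_nhds_iff_forall_nat_eventually_dist_lt {x : ℕ → E} {c : E} :
    Tendsto x atTop (𝓝 c) ↔ ∀ k : ℕ, ∀ᶠ j in atTop, dist (x j) c < 1 / (k + 1) := by
  simp [Metric.nhds_basis_ball_inv_nat_succ.tendsto_right_iff]

variable {Ω : Type*} (ξ : ℕ → Ω → E) (c : E)

lemma compl_setOf_tendsto_eq_iUnion_limsup :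
    {ω | Tendsto (fun j => ξ j ω) atTop (𝓝 c)}ᶜ =
      ⋃ k : ℕ, limsup (fun j => {ω | 1 / (k + 1 : ℝ) ≤ dist (ξ j ω) c}) atTop := by
  ext ω
  simp only [Set.mem_compl_iff, Set.mem_ofPred_eq, Set.mem_iUnion, mem_limsup_iff_frequently_mem,
    tendsto_atTop_nhds_iff_forall_nat_eventually_dist_lt, not_forall, not_eventually, not_lt]

lemma limsup_setOf_le_dist_subset_compl_setOf_tendsto {δ : ℝ} (hδ : 0 < δ) :
    limsup (fun j => {ω | δ ≤ dist (ξ j ω) c}) atTop ⊆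
      {ω | Tendsto (fun j => ξ j ω) atTop (𝓝 c)}ᶜ := fun _ hω hT =>
  (mem_limsup_iff_frequently_mem.1 hω) <|
    (Metric.tendsto_nhds.1 hT δ hδ).mono fun _ hj => not_le.2 hj

end Metric

section ZeroOneLaw

variable {Ω E : Type*} [MeasurableSpace Ω] {P : Measure Ω} [PseudoMetricSpace E]
  [MeasurableSpace E] [OpensMeasurableSpace E] {ξ : ℕ → Ω → E} {c : E}

lemma measurableSet_setOf_le_dist {α : Type*} [MeasurableSpace α] {f : α → E}
    (hf : Measurable f) (δ : ℝ) : MeasurableSet {x | δ ≤ dist (f x) c} :=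
  measurableSet_le measurable_const ((continuous_id.dist continuous_const).measurable.comp hf)

lemma ProbabilityTheory.iIndepFun.iIndepSet_setOf_le_dist (hind : iIndepFun ξ P) (δ : ℝ) :
    iIndepSet (fun j => {ω | δ ≤ dist (ξ j ω) c}) P :=
  hind.iIndepSet_preimage fun _ => measurableSet_setOf_le_dist measurable_id δ

theorem measure_setOf_tendsto_eq_one_iff (hmeas : ∀ j, Measurable (ξ j))
    (hind : iIndepFun ξ P) :
    P {ω | Tendsto (fun j => ξ j ω) atTop (𝓝 c)} = 1 ↔
      ∀ δ : ℝ, 0 < δ → Summable fun j => (P {ω | δ ≤ dist (ξ j ω) c}).toReal := by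
  have := hind.isProbabilityMeasure
  rw [← prob_compl_eq_zero_iff (measurableSet_tendsto _ hmeas)]
  refine ⟨fun h δ hδ => ?_, fun h => ?_⟩
  · exact ((hind.iIndepSet_setOf_le_dist δ).measure_limsup_eq_zero_iff
      fun j => measurableSet_setOf_le_dist (hmeas j) δ).1
      (measure_mono_null (limsup_setOf_le_dist_subset_compl_setOf_tendsto ξ c hδ) h)
  · rw [compl_setOf_tendsto_eq_iUnion_limsup]
    exact measure_iUnion_null fun k =>
      measure_limsup_atTop_eq_zero_of_summable_toReal (h _ (by positivity))

theorem measure_setOf_tendsto_eq_zero_or_one (hmeas : ∀ j, Measurable (ξ j))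
    (hind : iIndepFun ξ P) :
    P {ω | Tendsto (fun j => ξ j ω) atTop (𝓝 c)} = 0 ∨
      P {ω | Tendsto (fun j => ξ j ω) atTop (𝓝 c)} = 1 := by
  have := hind.isProbabilityMeasure
  by_cases h : ∀ δ : ℝ, 0 < δ → Summable fun j => (P {ω | δ ≤ dist (ξ j ω) c}).toReal
  · exact .inr ((measure_setOf_tendsto_eq_one_iff hmeas hind).2 h)
  obtain ⟨δ, hδ, hns⟩ := not_forall₂.1 h
  have hlimsup := (hind.iIndepSet_setOf_le_dist δ).measure_limsup_eq_one_of_not_summable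
    (fun j => measurableSet_setOf_le_dist (hmeas j) δ) hns
  refine .inl ((prob_compl_eq_one_iff (measurableSet_tendsto _ hmeas)).1 ?_)
  exact le_antisymm prob_le_one
    (hlimsup ▸ measure_mono (limsup_setOf_le_dist_subset_compl_setOf_tendsto ξ c hδ))

end ZeroOneLaw

/-- For independent complex random variables `(ξ j)`, the event
`{lim ξ j = −1}` has probability 1 iff for every `δ > 0` the tail infinite product
`∏_{j=N}^∞ P{|ξ j + 1| < δ}` is strictly positive for some `N`; moreover this
probability is either 0 or 1. -/
theorem prob_tendsto_neg_one_zero_one_law {Ω : Type*} [MeasurableSpace Ω]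
    (P : Measure Ω) [IsProbabilityMeasure P] (ξ : ℕ → Ω → ℂ)
    (hmeas : ∀ j, Measurable (ξ j))
    (hindep : iIndepFun ξ P) :
    ((P {ω | Tendsto (fun j => ξ j ω) atTop (nhds (-1))} = 1) ↔
      ∀ δ : ℝ, 0 < δ → ∃ N : ℕ, ∃ L : ℝ, 0 < L ∧
        Tendsto (fun n => ∏ j ∈ Finset.Ico N n,
            (P {ω | ‖ξ j ω + 1‖ < δ}).toReal) atTop (nhds L)) ∧
    (P {ω | Tendsto (fun j => ξ j ω) atTop (nhds (-1))} = 0 ∨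
      P {ω | Tendsto (fun j => ξ j ω) atTop (nhds (-1))} = 1) := by
  refine ⟨(measure_setOf_tendsto_eq_one_iff hmeas hindep).trans (forall₂_congr fun δ _ => ?_),
    measure_setOf_tendsto_eq_zero_or_one hmeas hindep⟩
  have hfactor : ∀ j, (P {ω | ‖ξ j ω + 1‖ < δ}).toReal =
      1 - (P {ω | δ ≤ dist (ξ j ω) (-1)}).toReal := fun j => by
    rw [← measureReal_def, ← measureReal_def, ← probReal_compl_eq_one_sub
      (measurableSet_setOf_le_dist (hmeas j) δ)]
    congr 1
    ext ω
    simp [dist_eq_norm]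
  simp_rw [hfactor]
  exact (exists_tendsto_prod_Ico_one_sub_pos_iff_summable (fun _ => ENNReal.toReal_nonneg)
    fun _ => ENNReal.toReal_le_of_le_ofReal zero_le_one (by simpa using prob_le_one)).symm
end
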